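/- arXiv:math/0305306 — 6 statements merged into one kernel-verified Lean document; each statement's English description precedes it below -/
import Mathlib

section
/- Let Λ and K be infinite groups and K₀ any group. Let Γ = (Λ ∗ K₀) × K, and identify Λ with its canonical copy in Γ, namely the image of Λ under the free-product embedding Λ → Λ ∗ K₀ followed by the embedding g ↦ (g, 1) into the direct product. Then Λ is wq-normal in Γ. -/
open Monoid
open scoped Monoid.Coprod

/-- An infinite subgroup `Λ` of a group `Γ` is *wq-normal* in `Γ` if for every
intermediate subgroup `H` with `Λ ≤ H` and `H ≠ Γ` there exists `g ∈ Γ \ H`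
such that `gHg⁻¹ ∩ H` is infinite. -/
def IsWqNormal {Γ : Type*} [Group Γ] (Λ : Subgroup Γ) : Prop :=
  (Λ : Set Γ).Infinite ∧
    ∀ H : Subgroup Γ, Λ ≤ H → H ≠ ⊤ →
      ∃ g : Γ, g ∉ H ∧ {x : Γ | g⁻¹ * x * g ∈ H ∧ x ∈ H}.Infinite

/-- If `Λ` and `K` are infinite groups and `K₀` is any group, then the canonical copy
of `Λ` in `Γ = (Λ ∗ K₀) × K` (the image of the free-product embedding followed by
`g ↦ (g, 1)`) is wq-normal in `Γ`. -/
theorem wqNormal_freeProduct_times_infinite (Λ K₀ K : Type*)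
    [Group Λ] [Group K₀] [Group K] [Infinite Λ] [Infinite K] :
    IsWqNormal
      (((MonoidHom.inl (Λ ∗ K₀) K).comp (Coprod.inl : Λ →* Λ ∗ K₀)).range) := by
  set f := ((MonoidHom.inl (Λ ∗ K₀) K).comp (Coprod.inl : Λ →* Λ ∗ K₀))
  have hfinj : Function.Injective f := by
    intro a b hab
    have : (Coprod.inl : Λ →* Λ ∗ K₀) a = Coprod.inl b := congrArg Prod.fst hab
    exact Coprod.inl_injective this
  constructor
  · exact Set.infinite_of_injective_forall_mem (f := fun a : Λ => f a) hfinj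
      (fun a => ⟨a, rfl⟩)
  · intro H hΛ hH
    by_cases hK : ∀ k : K, ((1 : Λ ∗ K₀), k) ∈ H
    · obtain ⟨g, hg⟩ : ∃ g : (Λ ∗ K₀) × K, g ∉ H := by
        by_contra h
        push_neg at h
        exact hH ((Subgroup.eq_top_iff' H).mpr h)
      refine ⟨g, hg, ?_⟩
      refine Set.infinite_of_injective_forall_mem
        (f := fun k : K => ((1 : Λ ∗ K₀), k)) ?_ ?_
      · intro a b hab; exact congrArg Prod.snd hab
      · intro k
        refine ⟨?_, hK k⟩
        have : g⁻¹ * ((1 : Λ ∗ K₀), k) * g = ((1 : Λ ∗ K₀), g.2⁻¹ * k * g.2) := by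
          ext <;> simp
        rw [this]
        exact hK _
    · push_neg at hK
      obtain ⟨k, hk⟩ := hK
      refine ⟨((1 : Λ ∗ K₀), k), hk, ?_⟩
      refine Set.infinite_of_injective_forall_mem
        (f := fun a : Λ => f a) hfinj ?_
      intro a
      have hmem : f a ∈ H := hΛ ⟨a, rfl⟩
      refine ⟨?_, hmem⟩
      have : ((1 : Λ ∗ K₀), k)⁻¹ * f a * ((1 : Λ ∗ K₀), k) = f a := by
        ext <;> simp [f]
      rw [this]
      exact hmem
end

section
/- For every countable subgroup S of the multiplicative group of positive real numbers there exist a nonempty countable index set I and a family (tᵢ)_{i∈I} of real numbers with tᵢ > 0 for all i ∈ I and ∑_{i∈I} tᵢ = 1, such that the subgroup of the positive reals generated by the set of ratios {tᵢ/tⱼ : i, j ∈ I} is exactly S. -/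
/-!
Scaling all weights by a common factor does not change their ratios, so it suffices to find a
summable family of positive reals lying in `S` among whose ratios every element of `S` occurs.
If `S` is trivial a single weight does. Otherwise `S` contains arbitrarily small elements
(powers of an element `< 1`); enumerating `S = {s₀, s₁, …}` and picking `cₙ ∈ S` with
`cₙ (1 + sₙ) < 2⁻ⁿ`, the family `cₙ, cₙ sₙ` is summable and has `sₙ = cₙ sₙ / cₙ` among its ratios.
-/

section RatioGroup

variable {G I : Type*}

def ratioGroup [Group G] (t : I → G) : Subgroup G :=
  Subgroup.closure {r | ∃ i j, r = t i / t j}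

theorem ratioGroup_div_const [CommGroup G] (t : I → G) (c : G) :
    ratioGroup (fun i => t i / c) = ratioGroup t := by
  simp only [ratioGroup, div_div_div_cancel_right]

theorem ratioGroup_eq_of_forall_mem [Group G] {S : Subgroup G} {t : I → G}
    (hmem : ∀ i, t i ∈ S) (hratio : ∀ s ∈ S, ∃ i j, s = t i / t j) :
    ratioGroup t = S := by
  refine le_antisymm ((Subgroup.closure_le S).mpr ?_) fun s hs => Subgroup.subset_closure ?_
  · rintro r ⟨i, j, rfl⟩
    exact div_mem (hmem i) (hmem j)
  · exact hratio s hs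

end RatioGroup

namespace Positive

section Field

variable {K : Type*} [Field K] [LinearOrder K] [IsStrictOrderedRing K]

theorem coe_div (x y : {x : K // 0 < x}) : ((x / y : {x : K // 0 < x}) : K) = x / y :=
  (div_eq_mul_inv _ _).symm

theorem exists_mem_lt_of_ne_bot [Archimedean K] {S : Subgroup {x : K // 0 < x}} (hS : S ≠ ⊥)
    {ε : K} (hε : 0 < ε) : ∃ c ∈ S, (c : K) < ε := by
  obtain ⟨⟨a, haS⟩, ha⟩ := Subgroup.ne_bot_iff_exists_ne_one.mp hS
  replace ha : (a : K) ≠ 1 := fun h => ha (Subtype.ext (Subtype.ext h))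
  obtain ⟨b, hbS, hb⟩ : ∃ b ∈ S, (b : K) < 1 := by
    rcases lt_or_gt_of_ne ha with ha | ha
    · exact ⟨a, haS, ha⟩
    · exact ⟨a⁻¹, inv_mem haS, inv_lt_one_of_one_lt₀ ha⟩
  obtain ⟨k, hk⟩ := exists_pow_lt_of_lt_one hε hb
  exact ⟨b ^ k, pow_mem hbS k, hk⟩

end Field

theorem exists_summable_ratioGroup_eq_of_ne_bot {S : Subgroup {x : ℝ // 0 < x}} [Countable S]
    (hS : S ≠ ⊥) :
    ∃ w : ℕ ⊕ ℕ → {x : ℝ // 0 < x}, Summable (fun i => (w i : ℝ)) ∧ ratioGroup w = S := by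
  obtain ⟨f, hf⟩ := exists_surjective_nat S
  have hfpos (n : ℕ) : 0 < (f n : ℝ) := (f n : {x : ℝ // 0 < x}).2
  have hsmall (n : ℕ) : ∃ c ∈ S, (c : ℝ) < (1 / 2) ^ n / (1 + (f n : ℝ)) :=
    exists_mem_lt_of_ne_bot hS (by have := hfpos n; positivity)
  choose c hcS hc using hsmall
  have hbound (n : ℕ) : (c n : ℝ) ≤ (1 / 2) ^ n ∧ (c n : ℝ) * f n ≤ (1 / 2) ^ n := by
    have h := (lt_div_iff₀ (by have := hfpos n; positivity)).mp (hc n)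
    have := (c n).2
    have := hfpos n
    constructor <;> nlinarith
  refine ⟨Sum.elim c (fun n => c n * f n), ?_, ratioGroup_eq_of_forall_mem ?_ ?_⟩
  · exact Summable.sum _
      (summable_geometric_two.of_nonneg_of_le (fun n => (c n).2.le) fun n => (hbound n).1)
      (summable_geometric_two.of_nonneg_of_le (fun n => (mul_pos (c n).2 (hfpos n)).le)
        fun n => (hbound n).2)
  · rintro (n | n)
    exacts [hcS n, mul_mem (hcS n) (f n).2]
  · intro s hs
    obtain ⟨n, hn⟩ := hf ⟨s, hs⟩
    exact ⟨.inr n, .inl n, by simp [hn]⟩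

theorem exists_summable_ratioGroup_eq (S : Subgroup {x : ℝ // 0 < x}) [Countable S] :
    ∃ (I : Type) (_ : Countable I) (_ : Nonempty I) (w : I → {x : ℝ // 0 < x}),
      Summable (fun i => (w i : ℝ)) ∧ ratioGroup w = S := by
  by_cases hS : S = ⊥
  · refine ⟨Unit, inferInstance, inferInstance, 1, .of_finite, ?_⟩
    refine ratioGroup_eq_of_forall_mem (fun _ => one_mem S) fun s hs => ⟨(), (), ?_⟩
    simpa [hS] using hs
  · exact ⟨ℕ ⊕ ℕ, inferInstance, inferInstance, exists_summable_ratioGroup_eq_of_ne_bot hS⟩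

end Positive

/-- For every countable subgroup `S` of the multiplicative group of positive reals
there is a nonempty countable family `(tᵢ)` of positive reals with `∑ᵢ tᵢ = 1`
whose ratio group `⟨tᵢ/tⱼ⟩` is exactly `S`. -/
theorem exists_weights_with_ratio_group (S : Subgroup {x : ℝ // 0 < x})
    (hS : Countable S) :
    ∃ (I : Type) (_ : Countable I) (_ : Nonempty I) (t : I → {x : ℝ // 0 < x}),
      HasSum (fun i => (t i : ℝ)) 1 ∧
      Subgroup.closure {r : {x : ℝ // 0 < x} | ∃ i j, r = t i / t j} = S := by
  obtain ⟨I, hI, ⟨i₀⟩, w, hsum, hw⟩ := Positive.exists_summable_ratioGroup_eq S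
  have hpos : 0 < ∑' i, (w i : ℝ) := hsum.tsum_pos (fun i => (w i).2.le) i₀ (w i₀).2
  refine ⟨I, hI, ⟨i₀⟩, fun i => w i / ⟨_, hpos⟩, ?_, ?_⟩
  · simpa [Positive.coe_div, div_self hpos.ne'] using hsum.hasSum.div_const (∑' i, (w i : ℝ))
  · exact (ratioGroup_div_const w _).trans hw
end

section
/- Let 𝕋 = ℝ/ℤ be the additive circle with its Haar probability measure λ, let π : ℝ → 𝕋 be the quotient map, and let r : 𝕋 → ℝ assign to each x ∈ 𝕋 its unique representative in the interval [0,1) (so π(r(x)) = x). For each t ∈ ℝ define T_t : 𝕋 × 𝕋 → 𝕋 × 𝕋 by T_t(x,y) = (x, y + π(t · r(x))). Then: (i) T₀ is the identity and T_s ∘ T_t = T_{s+t} for all s, t ∈ ℝ; (ii) each T_t is a measure-preserving transformation of (𝕋 × 𝕋, λ × λ); and (iii) T₁(x,y) = (x, y + x) for all x, y ∈ 𝕋. -/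
open MeasureTheory

/-- The flow `T_t(x,y) = (x, y + π(t·r(x)))` on `𝕋 × 𝕋`, where `r(x) ∈ [0,1)` is the
canonical representative of `x ∈ 𝕋 = ℝ/ℤ`: it is a one-parameter group of
measure-preserving transformations of `(𝕋 × 𝕋, λ × λ)` with `T₁(x,y) = (x, y + x)`. -/
theorem circle_flow_measurePreserving
    (r : AddCircle (1 : ℝ) → ℝ)
    (hr : ∀ x : AddCircle (1 : ℝ), r x ∈ Set.Ico (0 : ℝ) 1 ∧ ((r x : ℝ) : AddCircle (1 : ℝ)) = x)
    (T : ℝ → AddCircle (1 : ℝ) × AddCircle (1 : ℝ) → AddCircle (1 : ℝ) × AddCircle (1 : ℝ))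
    (hT : ∀ t p, T t p = (p.1, p.2 + ((t * r p.1 : ℝ) : AddCircle (1 : ℝ)))) :
    T 0 = id ∧
    (∀ s t : ℝ, T s ∘ T t = T (s + t)) ∧
    (∀ t : ℝ, MeasurePreserving (T t)
      ((volume : Measure (AddCircle (1 : ℝ))).prod (volume : Measure (AddCircle (1 : ℝ))))
      ((volume : Measure (AddCircle (1 : ℝ))).prod (volume : Measure (AddCircle (1 : ℝ))))) ∧
    (∀ x y : AddCircle (1 : ℝ), T 1 (x, y) = (x, y + x)) := by
  have hrm : Measurable r := by
    have : r = fun x => ((AddCircle.measurableEquivIco (1 : ℝ) 0 x : Set.Ico (0:ℝ) (0+1)) : ℝ) := by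
      funext x
      have h1 : r x ∈ Set.Ico (0:ℝ) (0 + 1) := by simpa using (hr x).1
      have h2 : ((AddCircle.equivIco (1:ℝ) 0 x : ℝ) : AddCircle (1:ℝ)) = x :=
        (AddCircle.equivIco (1:ℝ) 0).symm_apply_apply x
      have h3 : ((r x : ℝ) : AddCircle (1:ℝ)) = ((AddCircle.equivIco (1:ℝ) 0 x : ℝ) : AddCircle (1:ℝ)) := by
        rw [(hr x).2, h2]
      exact (AddCircle.coe_eq_coe_iff_of_mem_Ico h1 (AddCircle.equivIco (1:ℝ) 0 x).2).mp h3
    rw [this]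
    exact measurable_subtype_coe.comp (AddCircle.measurableEquivIco (1 : ℝ) 0).measurable
  refine ⟨?_, ?_, ?_, ?_⟩
  · funext p
    simp [hT]
  · intro s t
    funext p
    simp only [Function.comp_apply, hT]
    rw [add_assoc, ← QuotientAddGroup.mk_add]
    ring_nf
  · intro t
    have hg : Measurable (Function.uncurry
        (fun (x : AddCircle (1:ℝ)) (y : AddCircle (1:ℝ)) => y + ((t * r x : ℝ) : AddCircle (1:ℝ)))) := by
      apply Measurable.add
      · exact measurable_snd
      · exact (AddCircle.measurable_mk' ).comp ((measurable_const.mul hrm).comp measurable_fst)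
    have := MeasurePreserving.skew_product (f := fun x : AddCircle (1:ℝ) => x)
      (MeasurePreserving.id (volume : Measure (AddCircle (1:ℝ)))) hg
      (Filter.Eventually.of_forall (fun x =>
        (measurePreserving_add_right (volume : Measure (AddCircle (1:ℝ)))
          ((t * r x : ℝ) : AddCircle (1:ℝ))).map_eq))
    have heq : T t = fun p : AddCircle (1:ℝ) × AddCircle (1:ℝ) =>
        (p.1, p.2 + ((t * r p.1 : ℝ) : AddCircle (1:ℝ))) := funext (hT t)
    rw [heq]
    exact this
  · intro x y
    rw [hT]
    simp [(hr x).2]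
end

section
/- Fix an integer k ≥ 2 and let e_{ij} (1 ≤ i, j ≤ k) denote the standard matrix units of the complex matrix algebra M_k(ℂ). For t ∈ ℝ define u_t ∈ M_k(ℂ) ⊗ M_k(ℂ) (Kronecker product) by u_t = Σ_i e_{ii} ⊗ e_{ii} + Σ_{i<j} [cos(πt/2)(e_{ii} ⊗ e_{jj} + e_{jj} ⊗ e_{ii}) + sin(πt/2)(e_{ij} ⊗ e_{ji} − e_{ji} ⊗ e_{ij})]. Then: (i) u₀ = 1 and u_s · u_t = u_{s+t} for all s, t ∈ ℝ; (ii) each u_t is unitary, i.e. u_t u_t* = u_t* u_t = 1; (iii) u_t commutes with D ⊗ D for every diagonal matrix D ∈ M_k(ℂ), so that conjugation by u_t preserves any product state φ₀ ⊗ φ₀ whose density matrix is diagonal; and (iv) u₁ (e_{ii} ⊗ 1) u₁* = 1 ⊗ e_{ii} for every i. -/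
/-!
On the basis vectors `e_a ⊗ e_b`, `u_t` fixes the diagonal ones and rotates each plane
`span {e_a ⊗ e_b, e_b ⊗ e_a}` (`a < b`) by the angle `θ = πt/2`. Hence
`u_t = P + cos θ (1 - P) + sin θ J`, where `P` projects onto the diagonal pairs and `J` is the
signed flip `e_a ⊗ e_b ↦ ±e_b ⊗ e_a`. The relations `P² = P`, `PJ = JP = 0`, `J² = P - 1`
make `θ ↦ u_t` a one-parameter group, just like `θ ↦ e^{iθ}`, and `P* = P`, `J* = -J` make it
unitary. Both `P` and `J` intertwine a diagonal matrix `diag f` with `diag (f ∘ swap)`; this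
gives the commutation with `D ⊗ D`, and, since `u_1 = P + J`, the flip of `e_ii ⊗ 1` into
`1 ⊗ e_ii`.
-/

open Matrix Kronecker

/-- The standard matrix units of `M_k(ℂ)`. -/
noncomputable def matUnit (k : ℕ) (i j : Fin k) : Matrix (Fin k) (Fin k) ℂ :=
  Matrix.single i j 1

/-- The one-parameter family
`u_t = Σ_i e_{ii} ⊗ e_{ii} + Σ_{i<j} [cos(πt/2)(e_{ii} ⊗ e_{jj} + e_{jj} ⊗ e_{ii})
      + sin(πt/2)(e_{ij} ⊗ e_{ji} − e_{ji} ⊗ e_{ij})]` in `M_k(ℂ) ⊗ M_k(ℂ)`. -/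
noncomputable def gaugeUnitary (k : ℕ) (t : ℝ) :
    Matrix (Fin k × Fin k) (Fin k × Fin k) ℂ :=
  (∑ i : Fin k, matUnit k i i ⊗ₖ matUnit k i i) +
    ∑ i : Fin k, ∑ j : Fin k,
      if i < j then
        ((Real.cos (Real.pi * t / 2) : ℂ) •
            (matUnit k i i ⊗ₖ matUnit k j j + matUnit k j j ⊗ₖ matUnit k i i) +
          (Real.sin (Real.pi * t / 2) : ℂ) •
            (matUnit k i j ⊗ₖ matUnit k j i - matUnit k j i ⊗ₖ matUnit k i j))
      else 0

section PairMatrices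

variable {ι R : Type*} [LinearOrder ι] [CommRing R]

variable (ι R) in
def diagProj : Matrix (ι × ι) (ι × ι) R := diagonal fun p => if p.1 = p.2 then 1 else 0

def swapSign (p : ι × ι) : R := if p.1 < p.2 then 1 else if p.2 < p.1 then -1 else 0

variable (ι R) in
def antiSwap : Matrix (ι × ι) (ι × ι) R := of fun p q => if q = p.swap then swapSign p else 0

theorem swapSign_swap (p : ι × ι) : (swapSign p.swap : R) = -swapSign p := by
  rcases lt_trichotomy p.1 p.2 with h | h | h <;> simp [swapSign, h, h.not_gt]

theorem swapSign_eq_zero_of_eq {p : ι × ι} (h : p.1 = p.2) : (swapSign p : R) = 0 := by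
  simp [swapSign, h]

theorem swapSign_mul_swapSign_swap (p : ι × ι) :
    (swapSign p * swapSign p.swap : R) = if p.1 = p.2 then 0 else -1 := by
  rcases lt_trichotomy p.1 p.2 with h | h | h
  · simp [swapSign, h, h.not_gt, h.ne]
  · simp [swapSign, h]
  · simp [swapSign, h, h.not_gt, h.ne']

theorem star_swapSign [StarRing R] (p : ι × ι) : star (swapSign p : R) = swapSign p := by
  unfold swapSign
  split_ifs <;> simp

theorem conjTranspose_diagProj [StarRing R] : (diagProj ι R)ᴴ = diagProj ι R := by
  rw [diagProj, diagonal_conjTranspose]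
  congr 1 with p
  by_cases h : p.1 = p.2 <;> simp [h]

theorem conjTranspose_antiSwap [StarRing R] : (antiSwap ι R)ᴴ = -antiSwap ι R := by
  ext p q
  by_cases h : q = p.swap
  · subst h
    simp [antiSwap, swapSign_swap, star_swapSign]
  · have h' : p ≠ q.swap := fun hp => h (by rw [hp, Prod.swap_swap])
    simp [antiSwap, h, h']

variable [Fintype ι]

theorem diagProj_mul_self : diagProj ι R * diagProj ι R = diagProj ι R := by
  rw [diagProj, diagonal_mul_diagonal]
  congr 1 with p
  split_ifs <;> simp

theorem diagProj_mul_antiSwap : diagProj ι R * antiSwap ι R = 0 := by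
  ext p q
  by_cases h : p.1 = p.2 <;> simp [diagProj, antiSwap, swapSign_eq_zero_of_eq, h]

theorem antiSwap_mul_diagProj : antiSwap ι R * diagProj ι R = 0 := by
  ext p q
  by_cases h : q = p.swap
  · subst h
    by_cases hp : p.1 = p.2 <;> simp [diagProj, antiSwap, swapSign_eq_zero_of_eq, hp, eq_comm]
  · simp [diagProj, antiSwap, h]

theorem antiSwap_mul_self : antiSwap ι R * antiSwap ι R = diagProj ι R - 1 := by
  ext p q
  simp only [antiSwap, diagProj, mul_apply, of_apply, ite_mul, zero_mul, Finset.sum_ite_eq',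
    Finset.mem_univ, if_true, Prod.swap_swap, Matrix.sub_apply, diagonal_apply, one_apply]
  by_cases h : p = q
  · subst h
    simp only [if_true, swapSign_mul_swapSign_swap]
    split_ifs <;> simp
  · simp [h, Ne.symm h]

theorem diagProj_mul_diagonal_comp_swap (e : ι × ι → R) :
    diagProj ι R * diagonal (e ∘ Prod.swap) = diagonal e * diagProj ι R := by
  rw [diagProj, diagonal_mul_diagonal, diagonal_mul_diagonal]
  congr 1 with ⟨a, b⟩
  by_cases h : a = b
  · subst h
    simp
  · simp [h]

theorem antiSwap_mul_diagonal_comp_swap (e : ι × ι → R) :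
    antiSwap ι R * diagonal (e ∘ Prod.swap) = diagonal e * antiSwap ι R := by
  ext p q
  by_cases h : q = p.swap
  · subst h
    simp [antiSwap, mul_comm]
  · simp [antiSwap, h]

end PairMatrices

section PairSums

variable {ι M : Type*} [Fintype ι] [LinearOrder ι]

theorem sum_ite_lt_comp_swap [AddCommMonoid M] (g : ι × ι → M) :
    ∑ p : ι × ι, (if p.1 < p.2 then g p.swap else 0) =
      ∑ p : ι × ι, if p.2 < p.1 then g p else 0 :=
  Fintype.sum_equiv (Equiv.prodComm ι ι) _ _ fun _ => rfl

theorem sum_ite_lt_add_swap [AddCommMonoid M] (f : ι × ι → M) :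
    ∑ p : ι × ι, (if p.1 < p.2 then f p + f p.swap else 0) =
      ∑ p : ι × ι, if p.1 = p.2 then 0 else f p := by
  simp_rw [ite_add_zero]
  rw [Finset.sum_add_distrib, sum_ite_lt_comp_swap, ← Finset.sum_add_distrib]
  refine Finset.sum_congr rfl fun p _ => ?_
  rcases lt_trichotomy p.1 p.2 with h | h | h
  · simp [h, h.ne, h.not_gt]
  · simp [h]
  · simp [h, h.ne', h.not_gt]

theorem sum_ite_lt_sub_swap {R : Type*} [CommRing R] [AddCommGroup M] [Module R M]
    (f : ι × ι → M) :
    ∑ p : ι × ι, (if p.1 < p.2 then f p - f p.swap else 0) =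
      ∑ p : ι × ι, (swapSign p : R) • f p := by
  have hsplit (p : ι × ι) : (if p.1 < p.2 then f p - f p.swap else 0) =
      (if p.1 < p.2 then f p else 0) - if p.1 < p.2 then f p.swap else 0 := by
    split_ifs <;> simp
  simp only [hsplit]
  rw [Finset.sum_sub_distrib, sum_ite_lt_comp_swap, ← Finset.sum_sub_distrib]
  refine Finset.sum_congr rfl fun p _ => ?_
  rcases lt_trichotomy p.1 p.2 with h | h | h
  · simp [swapSign, h, h.not_gt]
  · simp [swapSign, h]
  · simp [swapSign, h, h.not_gt]

end PairSums

section RotationFamily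

variable {A : Type*} [Ring A] [Algebra ℝ A] (P J : A)

noncomputable def rotationFamily (θ : ℝ) : A := P + Real.cos θ • (1 - P) + Real.sin θ • J

theorem rotationFamily_zero : rotationFamily P J 0 = 1 := by
  simp [rotationFamily]

theorem rotationFamily_pi_div_two : rotationFamily P J (Real.pi / 2) = P + J := by
  simp [rotationFamily]

variable {P J}

theorem rotationFamily_mul_rotationFamily (hP : P * P = P) (hPJ : P * J = 0) (hJP : J * P = 0)
    (hJ : J * J = P - 1) (a b : ℝ) :
    rotationFamily P J a * rotationFamily P J b = rotationFamily P J (a + b) := by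
  have hPQ : P * (1 - P) = 0 := by rw [mul_sub, mul_one, hP, sub_self]
  have hQP : (1 - P) * P = 0 := by rw [sub_mul, one_mul, hP, sub_self]
  have hQQ : (1 - P) * (1 - P) = 1 - P := by rw [sub_mul, one_mul, hPQ, sub_zero]
  have hQJ : (1 - P) * J = J := by rw [sub_mul, one_mul, hPJ, sub_zero]
  have hJQ : J * (1 - P) = J := by rw [mul_sub, mul_one, hJP, sub_zero]
  simp only [rotationFamily, Real.cos_add, Real.sin_add, add_mul, mul_add, smul_mul_assoc,
    mul_smul_comm, hP, hPQ, hQP, hQQ, hQJ, hJQ, hPJ, hJP, hJ]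
  module

theorem star_rotationFamily [StarRing A] [StarModule ℝ A] (hP : star P = P) (hJ : star J = -J)
    (θ : ℝ) : star (rotationFamily P J θ) = rotationFamily P J (-θ) := by
  simp [rotationFamily, star_smul, hP, hJ]

theorem rotationFamily_mem_unitary [StarRing A] [StarModule ℝ A] (hP : P * P = P)
    (hPJ : P * J = 0) (hJP : J * P = 0) (hJ : J * J = P - 1) (hPs : star P = P)
    (hJs : star J = -J) (θ : ℝ) : rotationFamily P J θ ∈ unitary A := by
  rw [Unitary.mem_iff, star_rotationFamily hPs hJs,
    rotationFamily_mul_rotationFamily hP hPJ hJP hJ,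
    rotationFamily_mul_rotationFamily hP hPJ hJP hJ, neg_add_cancel, add_neg_cancel,
    rotationFamily_zero]
  exact ⟨rfl, rfl⟩

theorem Commute.rotationFamily_right {X : A} (hP : Commute X P) (hJ : Commute X J) (θ : ℝ) :
    Commute X (rotationFamily P J θ) :=
  (hP.add_right (((Commute.one_right X).sub_right hP).smul_right _)).add_right (hJ.smul_right _)

end RotationFamily

theorem matUnit_kronecker_matUnit (k : ℕ) (i j i' j' : Fin k) :
    matUnit k i j ⊗ₖ matUnit k i' j' = single (i, i') (j, j') 1 := by
  rw [matUnit, matUnit, single_kronecker_single, mul_one]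

theorem sum_matUnit_kronecker_matUnit (k : ℕ) :
    ∑ i : Fin k, matUnit k i i ⊗ₖ matUnit k i i = diagProj (Fin k) ℂ := by
  rw [diagProj, ← sum_single_eq_diagonal, Fintype.sum_prod_type]
  simp only [matUnit_kronecker_matUnit, apply_ite (single _ _), single_zero, Finset.sum_ite_eq,
    Finset.mem_univ, if_true]

theorem sum_lt_matUnit_kronecker_add (k : ℕ) :
    ∑ i : Fin k, ∑ j : Fin k, (if i < j then
      matUnit k i i ⊗ₖ matUnit k j j + matUnit k j j ⊗ₖ matUnit k i i else 0) =
      1 - diagProj (Fin k) ℂ := by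
  simp only [matUnit_kronecker_matUnit]
  rw [← Fintype.sum_prod_type' fun i j =>
    if i < j then single (i, j) (i, j) (1 : ℂ) + single (j, i) (j, i) 1 else 0]
  refine (sum_ite_lt_add_swap fun p => single p p (1 : ℂ)).trans ?_
  have hsingle (p : Fin k × Fin k) : (if p.1 = p.2 then 0 else single p p (1 : ℂ)) =
      single p p (if p.1 = p.2 then 0 else 1) := by
    split_ifs <;> simp
  rw [Finset.sum_congr rfl fun p _ => hsingle p, sum_single_eq_diagonal, diagProj,
    ← diagonal_one, diagonal_sub]
  congr 1 with p
  split_ifs <;> simp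

theorem sum_lt_matUnit_kronecker_sub (k : ℕ) :
    ∑ i : Fin k, ∑ j : Fin k, (if i < j then
      matUnit k i j ⊗ₖ matUnit k j i - matUnit k j i ⊗ₖ matUnit k i j else 0) =
      antiSwap (Fin k) ℂ := by
  simp only [matUnit_kronecker_matUnit]
  rw [← Fintype.sum_prod_type' fun i j =>
    if i < j then single (i, j) (j, i) (1 : ℂ) - single (j, i) (i, j) 1 else 0]
  refine (sum_ite_lt_sub_swap (R := ℂ) fun p => single p p.swap (1 : ℂ)).trans ?_
  ext r q
  simp [Matrix.sum_apply, smul_single, single_apply, antiSwap, ite_and, eq_comm]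

theorem gaugeUnitary_eq_rotationFamily (k : ℕ) (t : ℝ) :
    gaugeUnitary k t =
      rotationFamily (diagProj (Fin k) ℂ) (antiSwap (Fin k) ℂ) (Real.pi * t / 2) := by
  have hsplit (p : Prop) [Decidable p] (c s : ℝ)
      (X Y : Matrix (Fin k × Fin k) (Fin k × Fin k) ℂ) :
      (if p then c • X + s • Y else 0) =
        c • (if p then X else 0) + s • if p then Y else 0 := by
    split_ifs <;> simp
  simp only [gaugeUnitary, Complex.coe_smul, hsplit, Finset.sum_add_distrib, ← Finset.smul_sum,
    sum_matUnit_kronecker_matUnit, sum_lt_matUnit_kronecker_add, sum_lt_matUnit_kronecker_sub,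
    rotationFamily, add_assoc]

theorem Matrix.IsDiag.kronecker_self {ι R : Type*} [DecidableEq ι] [CommRing R]
    {D : Matrix ι ι R} (hD : D.IsDiag) :
    D ⊗ₖ D = diagonal fun p => D.diag p.1 * D.diag p.2 := by
  conv_lhs => rw [← hD.diagonal_diag]
  exact diagonal_kronecker_diagonal _ _

theorem matUnit_kronecker_one (k : ℕ) (i : Fin k) :
    matUnit k i i ⊗ₖ (1 : Matrix (Fin k) (Fin k) ℂ) =
      diagonal fun p => if p.1 = i then 1 else 0 := by
  rw [matUnit, ← diagonal_single, ← diagonal_one, diagonal_kronecker_diagonal]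
  simp [Pi.single_apply]

theorem one_kronecker_matUnit (k : ℕ) (i : Fin k) :
    (1 : Matrix (Fin k) (Fin k) ℂ) ⊗ₖ matUnit k i i =
      diagonal fun p => if p.2 = i then 1 else 0 := by
  rw [matUnit, ← diagonal_single, ← diagonal_one, diagonal_kronecker_diagonal]
  simp [Pi.single_apply]

theorem gaugeUnitary_properties_general (k : ℕ) :
    (gaugeUnitary k 0 = 1 ∧
      ∀ s t : ℝ, gaugeUnitary k s * gaugeUnitary k t = gaugeUnitary k (s + t)) ∧
    (∀ t : ℝ, gaugeUnitary k t * (gaugeUnitary k t)ᴴ = 1 ∧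
      (gaugeUnitary k t)ᴴ * gaugeUnitary k t = 1) ∧
    (∀ t : ℝ, ∀ D : Matrix (Fin k) (Fin k) ℂ, D.IsDiag →
      Commute (gaugeUnitary k t) (D ⊗ₖ D)) ∧
    (∀ i : Fin k,
      gaugeUnitary k 1 * (matUnit k i i ⊗ₖ (1 : Matrix (Fin k) (Fin k) ℂ)) *
          (gaugeUnitary k 1)ᴴ =
        (1 : Matrix (Fin k) (Fin k) ℂ) ⊗ₖ matUnit k i i) := by
  have hU := gaugeUnitary_eq_rotationFamily k
  have hunit (t : ℝ) : gaugeUnitary k t ∈ unitary _ := by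
    rw [hU]
    exact rotationFamily_mem_unitary diagProj_mul_self diagProj_mul_antiSwap antiSwap_mul_diagProj
      antiSwap_mul_self conjTranspose_diagProj conjTranspose_antiSwap _
  refine ⟨⟨?_, fun s t => ?_⟩, fun t => ⟨Unitary.mul_star_self_of_mem (hunit t),
    Unitary.star_mul_self_of_mem (hunit t)⟩, fun t D hD => ?_, fun i => ?_⟩
  · rw [hU, mul_zero, zero_div, rotationFamily_zero]
  · rw [hU, hU, hU, rotationFamily_mul_rotationFamily diagProj_mul_self diagProj_mul_antiSwap
      antiSwap_mul_diagProj antiSwap_mul_self, mul_add, add_div]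
  · have hsymm : (fun p : Fin k × Fin k => D.diag p.1 * D.diag p.2) ∘ Prod.swap =
        fun p => D.diag p.1 * D.diag p.2 := funext fun p => mul_comm _ _
    rw [hD.kronecker_self, hU]
    refine (Commute.rotationFamily_right ?_ ?_ _).symm
    · exact (hsymm ▸ diagProj_mul_diagonal_comp_swap _).symm
    · exact (hsymm ▸ antiSwap_mul_diagonal_comp_swap _).symm
  · have hflip : gaugeUnitary k 1 * (matUnit k i i ⊗ₖ 1) =
        (1 ⊗ₖ matUnit k i i) * gaugeUnitary k 1 := by
      rw [hU, mul_one, rotationFamily_pi_div_two, matUnit_kronecker_one,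
        one_kronecker_matUnit, add_mul, mul_add]
      exact congrArg₂ (· + ·)
        (diagProj_mul_diagonal_comp_swap fun p => if p.2 = i then 1 else 0)
        (antiSwap_mul_diagonal_comp_swap fun p => if p.2 = i then 1 else 0)
    rw [hflip, mul_assoc, ← star_eq_conjTranspose, Unitary.mul_star_self_of_mem (hunit 1),
      mul_one]

/-- Properties of the gauge unitaries `u_t`: they form a one-parameter unitary group,
commute with `D ⊗ D` for diagonal `D`, and `u₁` flips the two tensor factors of the
diagonal matrix units. -/
theorem gaugeUnitary_properties (k : ℕ) (hk : 2 ≤ k) :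
    (gaugeUnitary k 0 = 1 ∧
      ∀ s t : ℝ, gaugeUnitary k s * gaugeUnitary k t = gaugeUnitary k (s + t)) ∧
    (∀ t : ℝ, gaugeUnitary k t * (gaugeUnitary k t)ᴴ = 1 ∧
      (gaugeUnitary k t)ᴴ * gaugeUnitary k t = 1) ∧
    (∀ t : ℝ, ∀ D : Matrix (Fin k) (Fin k) ℂ, D.IsDiag →
      Commute (gaugeUnitary k t) (D ⊗ₖ D)) ∧
    (∀ i : Fin k,
      gaugeUnitary k 1 * (matUnit k i i ⊗ₖ (1 : Matrix (Fin k) (Fin k) ℂ)) *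
          (gaugeUnitary k 1)ᴴ =
        (1 : Matrix (Fin k) (Fin k) ℂ) ⊗ₖ matUnit k i i) :=
  gaugeUnitary_properties_general k
end

section
/- Let G be a countably infinite group, (Y₀, ν₀) a probability space, and X = Y₀^G equipped with the infinite product probability measure μ = ⊗_{g∈G} ν₀. For g ∈ G let σ_g : X → X be the Bernoulli shift σ_g(x)(h) = x(g⁻¹h). Then each σ_g is measurable and measure-preserving with respect to μ, and the action is mixing: for all measurable sets A, B ⊆ X, the measures μ(A ∩ σ_g⁻¹(B)) converge to μ(A)·μ(B) as g → ∞, i.e. along the cofinite filter on G. -/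
/-!
On cylinder sets mixing is exact: if `A` depends on the coordinates in `s` and `B` on those in `t`,
then `σ_g⁻¹ B` depends on the coordinates in `g⁻¹ t`, which is disjoint from `s` as soon as
`g ∉ t s⁻¹`, so `A` and `σ_g⁻¹ B` are independent. In general, `(A, B) ↦ μ (A ∩ σ_g⁻¹ B)` is
2-Lipschitz for the pseudometric `μ (A ∆ A')` on measurable sets, uniformly in `g`; hence the set
of pairs along which mixing holds is closed, and it contains the dense set of pairs of cylinders.
-/

open MeasureTheory Filter
open scoped symmDiff Topology Pointwise
open Measure ProbabilityTheory

namespace MeasureTheory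

variable {α : Type*} [MeasurableSpace α] {μ : Measure α} [IsFiniteMeasure μ]

lemma MeasuredSets.lipschitzWith_measureReal_inter_preimage {T : α → α}
    (hT : MeasurePreserving T μ μ) :
    LipschitzWith 2 fun p : MeasuredSets μ × MeasuredSets μ ↦ μ.real (p.1 ∩ T ⁻¹' p.2) := by
  let f (p : MeasuredSets μ × MeasuredSets μ) : MeasuredSets μ :=
    ⟨p.1 ∩ T ⁻¹' p.2, p.1.2.inter (hT.measurable p.2.2)⟩
  have hf : LipschitzWith 2 f := fun p q ↦ by
    have hsub : ((p.1 : Set α) ∩ T ⁻¹' p.2) ∆ (q.1 ∩ T ⁻¹' q.2)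
        ⊆ (p.1 : Set α) ∆ q.1 ∪ T ⁻¹' ((p.2 : Set α) ∆ q.2) := by
      intro x
      simp only [Set.mem_symmDiff, Set.mem_inter_iff, Set.mem_union, Set.mem_preimage]
      tauto
    calc edist (f p) (f q) ≤ μ ((p.1 : Set α) ∆ q.1 ∪ T ⁻¹' ((p.2 : Set α) ∆ q.2)) :=
          measure_mono hsub
      _ ≤ μ ((p.1 : Set α) ∆ q.1) + μ (T ⁻¹' ((p.2 : Set α) ∆ q.2)) := measure_union_le _ _
      _ = edist p.1 q.1 + edist p.2 q.2 := by
          rw [hT.measure_preimage]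
          · rfl
          · exact (p.2.2.symmDiff q.2.2).nullMeasurableSet
      _ ≤ 2 * edist p q := by
          rw [Prod.edist_eq, two_mul]
          exact add_le_add (le_max_left _ _) (le_max_right _ _)
  have := MeasuredSets.lipschitzWith_measureReal.comp hf
  rwa [one_mul] at this

lemma tendsto_measure_nhds_mul_iff_measureReal {ι : Type*} {l : Filter ι} {S : ι → Set α}
    {A B : Set α} :
    Tendsto (fun i ↦ μ (S i)) l (𝓝 (μ A * μ B)) ↔
      Tendsto (fun i ↦ μ.real (S i)) l (𝓝 (μ.real A * μ.real B)) := by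
  rw [← ENNReal.tendsto_toReal_iff (fun i ↦ measure_ne_top μ (S i)) (by finiteness)]
  simp [measureReal_def]

theorem tendsto_measure_inter_preimage_of_dense {ι : Type*} {T : ι → α → α}
    (hT : ∀ i, MeasurePreserving (T i) μ μ) {l : Filter ι} {C : Set (Set α)}
    (hC : Dense ((↑) ⁻¹' C : Set (MeasuredSets μ)))
    (hmix : ∀ A ∈ C, ∀ B ∈ C, Tendsto (fun i ↦ μ (A ∩ T i ⁻¹' B)) l (𝓝 (μ A * μ B)))
    {A B : Set α} (hA : MeasurableSet A) (hB : MeasurableSet B) :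
    Tendsto (fun i ↦ μ (A ∩ T i ⁻¹' B)) l (𝓝 (μ A * μ B)) := by
  simp_rw [tendsto_measure_nhds_mul_iff_measureReal] at hmix ⊢
  have hequi : Equicontinuous fun i (p : MeasuredSets μ × MeasuredSets μ) ↦
      μ.real (p.1 ∩ T i ⁻¹' p.2) :=
    (LipschitzWith.uniformEquicontinuous _ 2 fun i ↦
      MeasuredSets.lipschitzWith_measureReal_inter_preimage (hT i)).equicontinuous
  have hlim : Continuous fun p : MeasuredSets μ × MeasuredSets μ ↦ μ.real p.1 * μ.real p.2 :=
    (MeasuredSets.lipschitzWith_measureReal.continuous.comp continuous_fst).mul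
      (MeasuredSets.lipschitzWith_measureReal.continuous.comp continuous_snd)
  exact (hC.prod hC).induction (P := fun p ↦ Tendsto _ l (𝓝 (μ.real p.1 * μ.real p.2)))
    (fun p hp ↦ hmix _ hp.1 _ hp.2) (hequi.isClosed_setOfPred_tendsto hlim) (⟨A, hA⟩, ⟨B, hB⟩)

section Cylinders

variable {ι : Type*} {X : ι → Type*} [∀ i, MeasurableSpace (X i)]

lemma dense_measurableCylinders (μ : Measure (∀ i, X i)) [IsFiniteMeasure μ] :
    Dense ((↑) ⁻¹' measurableCylinders X : Set (MeasuredSets μ)) :=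
  dense_of_generateFrom_isSetRing isSetRing_measurableCylinders
    ⟨{Set.univ}, Set.countable_singleton _, by simpa using univ_mem_measurableCylinders X, by simp⟩
    generateFrom_measurableCylinders.symm

lemma infinitePi_cylinder_inter_cylinder (P : ∀ i, Measure (X i))
    [∀ i, IsProbabilityMeasure (P i)] {s u : Finset ι} (hsu : Disjoint s u)
    {S : Set (∀ i : s, X i)} {U : Set (∀ i : u, X i)} (hS : MeasurableSet S)
    (hU : MeasurableSet U) :
    infinitePi P (cylinder s S ∩ cylinder u U) =
      infinitePi P (cylinder s S) * infinitePi P (cylinder u U) :=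
  ((iIndepFun_infinitePi (X := fun _ ↦ id) fun _ ↦ measurable_id).indepFun_finset s u hsu
    fun i ↦ measurable_pi_apply i).measure_inter_preimage_eq_mul S U hS hU

end Cylinders

section BernoulliShift

variable {G Y : Type*} [Group G] [MeasurableSpace Y] (ν : Measure Y) [IsProbabilityMeasure ν]

lemma measurePreserving_shift_infinitePi (g : G) :
    MeasurePreserving (fun (x : G → Y) h ↦ x (g⁻¹ * h))
      (infinitePi fun _ ↦ ν) (infinitePi fun _ ↦ ν) := by
  have hshift : (fun (x : G → Y) h ↦ x (g⁻¹ * h)) =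
      MeasurableEquiv.piCongrLeft (fun _ ↦ Y) (Equiv.mulLeft g) := by
    ext x h
    simpa using (MeasurableEquiv.piCongrLeft_apply_apply (β := fun _ ↦ Y)
      (Equiv.mulLeft g) x (g⁻¹ * h)).symm
  rw [hshift]
  exact ⟨MeasurableEquiv.measurable _,
    infinitePi_map_piCongrLeft (fun _ : G ↦ ν) (Equiv.mulLeft g)⟩

lemma eventually_infinitePi_cylinder_inter_shift_preimage {s t : Finset G}
    {S : Set (s → Y)} {T : Set (t → Y)} (hS : MeasurableSet S) (hT : MeasurableSet T) :
    ∀ᶠ g in cofinite,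
      infinitePi (fun _ ↦ ν) (cylinder s S ∩ (fun x h ↦ x (g⁻¹ * h)) ⁻¹' cylinder t T) =
        infinitePi (fun _ ↦ ν) (cylinder s S) * infinitePi (fun _ ↦ ν) (cylinder t T) := by
  classical
  filter_upwards [(t * s⁻¹).eventually_cofinite_notMem] with g hg
  let φ (y : (t.map (mulLeftEmbedding g⁻¹) : Set G) → Y) (j : t) : Y :=
    y ⟨g⁻¹ * j, Finset.mem_map_of_mem _ j.2⟩
  have hpre : (fun (x : G → Y) h ↦ x (g⁻¹ * h)) ⁻¹' cylinder t T =
      cylinder (t.map (mulLeftEmbedding g⁻¹)) (φ ⁻¹' T) := rfl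
  have hdisj : Disjoint s (t.map (mulLeftEmbedding g⁻¹)) := by
    refine Finset.disjoint_right.mpr fun i hi his ↦ hg ?_
    obtain ⟨j, hj, rfl⟩ := Finset.mem_map.mp hi
    simpa using Finset.mul_mem_mul hj (Finset.inv_mem_inv his)
  rw [hpre, infinitePi_cylinder_inter_cylinder _ hdisj hS ((by fun_prop : Measurable φ) hT),
    ← hpre, (measurePreserving_shift_infinitePi ν g).measure_preimage
      (hT.cylinder _).nullMeasurableSet]

end BernoulliShift

end MeasureTheory

theorem bernoulli_shift_measurePreserving_mixing_general
    {G : Type*} [Group G]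
    {Y₀ : Type*} [MeasurableSpace Y₀] (ν₀ : Measure Y₀) [IsProbabilityMeasure ν₀]
    (μ : Measure (G → Y₀))
    (hμ : ∀ (s : Finset G) (B : G → Set Y₀), (∀ g : G, MeasurableSet (B g)) →
      μ {x : G → Y₀ | ∀ g ∈ s, x g ∈ B g} = ∏ g ∈ s, ν₀ (B g))
    (σ : G → (G → Y₀) → (G → Y₀))
    (hσ : ∀ (g : G) (x : G → Y₀) (h : G), σ g x h = x (g⁻¹ * h)) :
    (∀ g : G, MeasurePreserving (σ g) μ μ) ∧
    ∀ A B : Set (G → Y₀), MeasurableSet A → MeasurableSet B →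
      Tendsto (fun g : G => μ (A ∩ σ g ⁻¹' B)) cofinite (nhds (μ A * μ B)) := by
  obtain rfl : σ = fun g x h ↦ x (g⁻¹ * h) := by
    funext g x h
    exact hσ g x h
  obtain rfl : μ = infinitePi fun _ ↦ ν₀ := eq_infinitePi _ hμ
  have hshift := measurePreserving_shift_infinitePi (G := G) ν₀
  refine ⟨hshift, fun A B ↦ tendsto_measure_inter_preimage_of_dense hshift
    (dense_measurableCylinders _) ?_⟩
  simp only [mem_measurableCylinders]
  rintro _ ⟨s, S, hS, rfl⟩ _ ⟨t, T, hT, rfl⟩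
  exact tendsto_const_nhds.congr'
    (EventuallyEq.symm (eventually_infinitePi_cylinder_inter_shift_preimage ν₀ hS hT))

/-- The Bernoulli shift action of a countably infinite group `G` on the product
probability space `(Y₀^G, ⊗_g ν₀)` is measure-preserving and mixing: for all
measurable `A, B`, `μ(A ∩ σ_g⁻¹(B)) → μ(A)·μ(B)` as `g → ∞` (cofinite filter).
The product measure `μ` is characterized by its values on measurable cylinders. -/
theorem bernoulli_shift_measurePreserving_mixing
    {G : Type*} [Group G] [Countable G] [Infinite G]
    {Y₀ : Type*} [MeasurableSpace Y₀] (ν₀ : Measure Y₀) [IsProbabilityMeasure ν₀]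
    (μ : Measure (G → Y₀)) [IsProbabilityMeasure μ]
    (hμ : ∀ (s : Finset G) (B : G → Set Y₀), (∀ g : G, MeasurableSet (B g)) →
      μ {x : G → Y₀ | ∀ g ∈ s, x g ∈ B g} = ∏ g ∈ s, ν₀ (B g))
    (σ : G → (G → Y₀) → (G → Y₀))
    (hσ : ∀ (g : G) (x : G → Y₀) (h : G), σ g x h = x (g⁻¹ * h)) :
    (∀ g : G, MeasurePreserving (σ g) μ μ) ∧
    ∀ A B : Set (G → Y₀), MeasurableSet A → MeasurableSet B →
      Tendsto (fun g : G => μ (A ∩ σ g ⁻¹' B)) cofinite (nhds (μ A * μ B)) :=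
  bernoulli_shift_measurePreserving_mixing_general ν₀ μ hμ σ hσ
end

section
/- Let A be a unital ring with involution * (a star ring), and let α, β : A → A be ring automorphisms that commute with the involution (α(a*) = α(a)* and β(a*) = β(a)* for all a) and satisfy β(α(a)) = α⁻¹(β(a)) for all a ∈ A. Let Q ⊆ A be a subset closed under * such that β(y) = y for all y ∈ Q, and let w ∈ A satisfy w·y = α(y)·w for all y ∈ Q. Then α(y)·(w·β(w*)) = (w·β(w*))·α⁻¹(y) for all y ∈ Q, and consequently the element w' := α(w·β(w*)) satisfies w'·y = α(α(y))·w' for all y ∈ Q. -/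
/-- Doubling the deformation parameter in an s-malleable deformation: if `α`, `β` are
star-preserving ring automorphisms with `β ∘ α = α⁻¹ ∘ β`, `Q` is a star-closed subset
fixed pointwise by `β`, and `w·y = α(y)·w` for all `y ∈ Q`, then
`α(y)·(w·β(w*)) = (w·β(w*))·α⁻¹(y)` for all `y ∈ Q`, and hence
`w' = α(w·β(w*))` satisfies `w'·y = α(α(y))·w'` for all `y ∈ Q`. -/
theorem intertwiner_doubling {A : Type*} [Ring A] [StarRing A]
    (α β : A ≃+* A)
    (hα : ∀ a : A, α (star a) = star (α a))
    (hβ : ∀ a : A, β (star a) = star (β a))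
    (hcomm : ∀ a : A, β (α a) = α.symm (β a))
    (Q : Set A) (hQstar : ∀ y ∈ Q, star y ∈ Q)
    (hβQ : ∀ y ∈ Q, β y = y)
    (w : A) (hw : ∀ y ∈ Q, w * y = α y * w) :
    (∀ y ∈ Q, α y * (w * β (star w)) = (w * β (star w)) * α.symm y) ∧
    (∀ y ∈ Q, α (w * β (star w)) * y = α (α y) * α (w * β (star w))) := by
  have key : ∀ y ∈ Q, α y * (w * β (star w)) = (w * β (star w)) * α.symm y := by
    intro y hy
    have h1 : w * star y = α (star y) * w := hw (star y) (hQstar y hy)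
    have h2 : y * star w = star w * α y := by
      have := congrArg star h1
      simpa [star_mul, hα] using this
    have h3 : y * β (star w) = β (star w) * α.symm y := by
      have := congrArg β h2
      simpa [map_mul, hβQ y hy, hcomm] using this
    calc α y * (w * β (star w)) = (α y * w) * β (star w) := by rw [mul_assoc]
      _ = w * y * β (star w) := by rw [← hw y hy]
      _ = w * (y * β (star w)) := by rw [mul_assoc]
      _ = w * (β (star w) * α.symm y) := by rw [h3]
      _ = (w * β (star w)) * α.symm y := by rw [mul_assoc]
  refine ⟨key, fun y hy => ?_⟩
  have := congrArg α (key y hy)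
  simpa [map_mul] using this.symm
end
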